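/- Let N ≥ 1 have canonical Ostrowski digits b_n, …, b_0 with respect to α, and let (r, s, t) be a canonical triple: 0 ≤ r ≤ n, 0 ≤ s ≤ b_r − 1 and 1 ≤ t ≤ q_r (so b_r ≥ 1). Set M = Σ_{u=r+1}^{n} b_u·q_u + s·q_r + t, ε^L = ((s−1)·q_r + t)/(q_r·q'_{r+1}) + 1/q'_{r+2}, l = {(−1)^r·t·p_r/q_r} + ε^L, and u = l + 1/q'_{r+1}. Then 0 < 1/q'_{r+2} ≤ l and u < 1, and moreover: if r is even then l < {M·α} < u, while if r is odd then l < 1 − {M·α} < u. -/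

import Mathlib

open Finset

/-- Complete quotients of `α`: `a'₀ = α`, `a'_{n+1} = 1/(a'_n - ⌊a'_n⌋)`. -/
noncomputable def cq (α : ℝ) : ℕ → ℝ
  | 0 => α
  | n + 1 => 1 / (cq α n - (⌊cq α n⌋ : ℝ))

/-- Partial quotients `a_n = ⌊a'_n⌋`. -/
noncomputable def aq (α : ℝ) (n : ℕ) : ℕ := (⌊cq α n⌋).toNat

/-- Quasiperiods: `q₋₂ = 1`, `q₋₁ = 0`, `q_n = a_n q_{n-1} + q_{n-2}` (so `q₀ = 1`, `q₁ = a₁`). -/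
noncomputable def qp (α : ℝ) : ℕ → ℕ
  | 0 => 1
  | 1 => aq α 1
  | n + 2 => aq α (n + 2) * qp α (n + 1) + qp α n

/-- Error periods: `q'_n = a'_n q_{n-1} + q_{n-2}` (so `q'₀ = 1`, `q'₁ = a'₁`). -/
noncomputable def qe (α : ℝ) : ℕ → ℝ
  | 0 => 1
  | 1 => cq α 1
  | n + 2 => cq α (n + 2) * (qp α (n + 1) : ℝ) + (qp α n : ℝ)

/-- Convergent numerators: `p₋₂ = 0`, `p₋₁ = 1`, `p_n = a_n p_{n-1} + p_{n-2}`
(so for `0 < α < 1`, `p₀ = 0`, `p₁ = 1`). -/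
noncomputable def pn (α : ℝ) : ℕ → ℕ
  | 0 => 0
  | 1 => 1
  | n + 2 => aq α (n + 2) * pn α (n + 1) + pn α n

/-- `p'_n = a'_n p_{n-1} + p_{n-2}` (so for `0 < α < 1`, `p'₀ = α`, `p'₁ = 1`). -/
noncomputable def pe (α : ℝ) : ℕ → ℝ
  | 0 => α
  | 1 => 1
  | n + 2 => cq α (n + 2) * (pn α (n + 1) : ℝ) + (pn α n : ℝ)

/-- `ostN α N = max {r : q_r ≤ N}` (quasiperiods satisfy `q_r ≥ r`, so the bound `N` suffices). -/
noncomputable def ostN (α : ℝ) (N : ℕ) : ℕ :=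
  Nat.findGreatest (fun r => qp α r ≤ N) N

/-- The remainders of the greedy Ostrowski algorithm: `ostM α N k = M_{n-k}` where
`M_n = N` and `M_{r-1} = M_r % q_r`. -/
noncomputable def ostM (α : ℝ) (N : ℕ) : ℕ → ℕ
  | 0 => N
  | k + 1 => ostM α N k % qp α (ostN α N - k)

/-- The canonical (greedy) Ostrowski digits: `b_r = ⌊M_r / q_r⌋`. -/
noncomputable def ostDigit (α : ℝ) (N r : ℕ) : ℕ :=
  ostM α N (ostN α N - r) / qp α r


variable {α : ℝ}

lemma cq_irr (hirr : Irrational α) : ∀ n, Irrational (cq α n) := by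
  intro n
  induction n with
  | zero => exact hirr
  | succ n ih =>
    show Irrational (1 / (cq α n - (⌊cq α n⌋ : ℝ)))
    rw [one_div]
    exact ((Irrational.sub_intCast ih _).inv)

lemma cq_fract_pos (hirr : Irrational α) : ∀ n, 0 < cq α n - (⌊cq α n⌋ : ℝ) := by
  intro n
  have h := (cq_irr hirr n).ne_int ⌊cq α n⌋
  have h1 := Int.fract_nonneg (cq α n)
  have h2 : Int.fract (cq α n) ≠ 0 := by
    intro hc
    apply h
    have h4 := Int.floor_add_fract (cq α n)
    rw [hc, add_zero] at h4
    exact h4.symm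
  have h3 : 0 < Int.fract (cq α n) := lt_of_le_of_ne h1 (Ne.symm h2)
  rw [Int.self_sub_floor]; exact h3

lemma cq_fract_lt_one (n : ℕ) : cq α n - (⌊cq α n⌋ : ℝ) < 1 := by
  rw [Int.self_sub_floor]; exact Int.fract_lt_one _

lemma one_lt_cq (hirr : Irrational α) : ∀ n, 1 ≤ n → 1 < cq α n := by
  intro n hn
  match n, hn with
  | n + 1, _ =>
    show 1 < 1 / (cq α n - (⌊cq α n⌋ : ℝ))
    rw [lt_div_iff₀ (cq_fract_pos hirr n)]
    simpa using cq_fract_lt_one (α := α) n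

lemma cq_pos (hirr : Irrational α) (h0 : 0 < α) : ∀ n, 0 < cq α n := by
  intro n
  cases n with
  | zero => exact h0
  | succ n => exact lt_trans one_pos (one_lt_cq hirr (n+1) (Nat.le_add_left 1 n))

lemma aq_cast (hirr : Irrational α) (h0 : 0 < α) (n : ℕ) :
    (aq α n : ℝ) = (⌊cq α n⌋ : ℝ) := by
  have h : (0:ℤ) ≤ ⌊cq α n⌋ := Int.floor_nonneg.2 (le_of_lt (cq_pos hirr h0 n))
  rw [aq]
  exact_mod_cast congrArg (fun z : ℤ => (z : ℝ)) (Int.toNat_of_nonneg h)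

lemma one_le_aq (hirr : Irrational α) (n : ℕ) (hn : 1 ≤ n) : 1 ≤ aq α n := by
  have h : (1:ℤ) ≤ ⌊cq α n⌋ := by
    rw [Int.le_floor]; exact_mod_cast (one_lt_cq hirr n hn).le
  rw [aq]; omega

lemma aq_lt_cq (hirr : Irrational α) (h0 : 0 < α) (n : ℕ) : (aq α n : ℝ) < cq α n := by
  rw [aq_cast hirr h0]
  have := cq_fract_pos hirr n
  linarith

lemma cq_lt_aq_add_one (hirr : Irrational α) (h0 : 0 < α) (n : ℕ) :
    cq α n < (aq α n : ℝ) + 1 := by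
  rw [aq_cast hirr h0]
  have := cq_fract_lt_one (α := α) n
  linarith

lemma cq_succ (hirr : Irrational α) (h0 : 0 < α) (n : ℕ) :
    cq α (n+1) = 1 / (cq α n - (aq α n : ℝ)) := by
  rw [aq_cast hirr h0]; rfl

lemma cq_rel (hirr : Irrational α) (h0 : 0 < α) (n : ℕ) :
    cq α n = (aq α n : ℝ) + 1 / cq α (n+1) := by
  rw [cq_succ hirr h0, one_div_one_div]
  ring
lemma qp_pos (hirr : Irrational α) : ∀ n, 0 < qp α n := by
  intro n
  induction n using Nat.strong_induction_on with
  | _ n ih =>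
    match n with
    | 0 => exact one_pos
    | 1 => exact one_le_aq hirr 1 le_rfl
    | n + 2 =>
      show 0 < aq α (n + 2) * qp α (n + 1) + qp α n
      have := ih n (by omega)
      omega

lemma qp_mono (hirr : Irrational α) (n : ℕ) : qp α n ≤ qp α (n+1) := by
  match n with
  | 0 => exact one_le_aq hirr 1 le_rfl
  | n + 1 =>
    show qp α (n+1) ≤ aq α (n + 2) * qp α (n + 1) + qp α n
    have h1 := one_le_aq hirr (n+2) (by omega)
    nlinarith [qp_pos hirr n, qp_pos hirr (n+1)]

lemma qp_mono_le (hirr : Irrational α) {m n : ℕ} (h : m ≤ n) : qp α m ≤ qp α n := by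
  induction n with
  | zero =>
    have : m = 0 := by omega
    subst this; rfl
  | succ n ih =>
    rcases Nat.lt_or_ge m (n+1) with h' | h'
    · exact le_trans (ih (by omega)) (qp_mono hirr n)
    · have : m = n + 1 := by omega
      subst this; rfl

lemma qp_add_le (hirr : Irrational α) (n : ℕ) : qp α n + qp α (n+1) ≤ qp α (n+2) := by
  show qp α n + qp α (n+1) ≤ aq α (n + 2) * qp α (n + 1) + qp α n
  have h1 := one_le_aq hirr (n+2) (by omega)
  nlinarith [qp_pos hirr (n+1)]

lemma le_qp (hirr : Irrational α) : ∀ n, n ≤ qp α n := by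
  intro n
  induction n using Nat.strong_induction_on with
  | _ n ih =>
    match n with
    | 0 => omega
    | 1 => exact one_le_aq hirr 1 le_rfl
    | n + 2 =>
      have h1 := ih (n+1) (by omega)
      have h2 := qp_pos hirr n
      have := qp_add_le hirr n
      omega

lemma qe_pos (hirr : Irrational α) (h0 : 0 < α) : ∀ n, 0 < qe α n := by
  intro n
  match n with
  | 0 => exact one_pos
  | 1 => exact cq_pos hirr h0 1
  | n + 2 =>
    show 0 < cq α (n + 2) * (qp α (n + 1) : ℝ) + (qp α n : ℝ)
    have h1 := cq_pos hirr h0 (n+2)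
    have h2 := qp_pos hirr (n+1)
    have h3 := qp_pos hirr n
    positivity

lemma qp_lt_qe (hirr : Irrational α) (h0 : 0 < α) (n : ℕ) :
    (qp α (n+1) : ℝ) < qe α (n+1) := by
  match n with
  | 0 =>
    show (aq α 1 : ℝ) < cq α 1
    exact aq_lt_cq hirr h0 1
  | n + 1 =>
    show ((aq α (n + 2) * qp α (n + 1) + qp α n : ℕ) : ℝ) <
      cq α (n + 2) * (qp α (n + 1) : ℝ) + (qp α n : ℝ)
    push_cast
    have h1 := aq_lt_cq hirr h0 (n+2)
    have h2 : (1:ℝ) ≤ (qp α (n+1) : ℝ) := by exact_mod_cast qp_pos hirr (n+1)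
    nlinarith

lemma qe_lt (hirr : Irrational α) (h0 : 0 < α) (n : ℕ) :
    qe α (n+1) < (qp α (n+1) : ℝ) + (qp α n : ℝ) := by
  match n with
  | 0 =>
    show cq α 1 < (aq α 1 : ℝ) + (1:ℕ)
    push_cast
    exact cq_lt_aq_add_one hirr h0 1
  | n + 1 =>
    show cq α (n + 2) * (qp α (n + 1) : ℝ) + (qp α n : ℝ) <
      ((aq α (n + 2) * qp α (n + 1) + qp α n : ℕ) : ℝ) + (qp α (n+1) : ℝ)
    push_cast
    have h1 := cq_lt_aq_add_one hirr h0 (n+2)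
    have h2 : (0:ℝ) < (qp α (n+1) : ℝ) := by exact_mod_cast qp_pos hirr (n+1)
    nlinarith

lemma qe_mono (hirr : Irrational α) (h0 : 0 < α) (n : ℕ) :
    qe α (n+1) < qe α (n+2) := by
  calc qe α (n+1) < (qp α (n+1) : ℝ) + (qp α n : ℝ) := qe_lt hirr h0 n
  _ ≤ (qp α (n+2) : ℝ) := by exact_mod_cast (by have := qp_add_le hirr n; omega : qp α (n+1) + qp α n ≤ qp α (n+2))
  _ < qe α (n+2) := qp_lt_qe hirr h0 (n+1)
lemma cq_ne_zero (hirr : Irrational α) (h0 : 0 < α) (n : ℕ) : cq α n ≠ 0 :=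
  ne_of_gt (cq_pos hirr h0 n)

lemma cq_sub_aq (hirr : Irrational α) (h0 : 0 < α) (n : ℕ) :
    cq α n - (aq α n : ℝ) = 1 / cq α (n+1) := by
  rw [cq_rel hirr h0 n]; ring

lemma pe_succ (hirr : Irrational α) (h0 : 0 < α) (h1 : α < 1) (n : ℕ) :
    pe α (n+1) = cq α (n+1) * pe α n := by
  match n with
  | 0 =>
    show (1:ℝ) = cq α 1 * α
    rw [show cq α 1 = 1 / (α - (⌊α⌋:ℝ)) from rfl]
    rw [show (⌊α⌋:ℝ) = 0 by norm_cast; exact Int.floor_eq_zero_iff.2 ⟨h0.le, h1⟩]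
    field_simp
    rw [sub_zero, div_self h0.ne']
  | 1 =>
    show cq α 2 * (pn α 1 : ℝ) + (pn α 0 : ℝ) = cq α 2 * 1
    norm_num [pn]
  | n + 2 =>
    show cq α (n+3) * (pn α (n+2) : ℝ) + (pn α (n+1) : ℝ) =
      cq α (n+3) * (cq α (n+2) * (pn α (n+1) : ℝ) + (pn α n : ℝ))
    have hrec : (pn α (n+2) : ℝ) = (aq α (n+2) : ℝ) * (pn α (n+1) : ℝ) + (pn α n : ℝ) := by
      show ((aq α (n + 2) * pn α (n + 1) + pn α n : ℕ) : ℝ) = _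
      push_cast; ring
    have hcq := cq_rel hirr h0 (n+2)
    have hne := cq_ne_zero hirr h0 (n+3)
    rw [hrec, hcq]
    field_simp
    ring
lemma qe_succ (hirr : Irrational α) (h0 : 0 < α) (n : ℕ) :
    qe α (n+1) = cq α (n+1) * qe α n := by
  match n with
  | 0 =>
    show cq α 1 = cq α 1 * 1
    ring
  | 1 =>
    show cq α 2 * (qp α 1 : ℝ) + (qp α 0 : ℝ) = cq α 2 * cq α 1
    have hcq := cq_rel hirr h0 1
    have hne := cq_ne_zero hirr h0 2
    rw [show qp α 1 = aq α 1 from rfl, show qp α 0 = 1 from rfl, hcq]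
    field_simp
    ring
  | n + 2 =>
    show cq α (n+3) * (qp α (n+2) : ℝ) + (qp α (n+1) : ℝ) =
      cq α (n+3) * (cq α (n+2) * (qp α (n+1) : ℝ) + (qp α n : ℝ))
    have hrec : (qp α (n+2) : ℝ) = (aq α (n+2) : ℝ) * (qp α (n+1) : ℝ) + (qp α n : ℝ) := by
      show ((aq α (n + 2) * qp α (n + 1) + qp α n : ℕ) : ℝ) = _
      push_cast; ring
    have hcq := cq_rel hirr h0 (n+2)
    have hne := cq_ne_zero hirr h0 (n+3)
    rw [hrec, hcq]
    field_simp
    ring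

lemma alpha_qe (hirr : Irrational α) (h0 : 0 < α) (h1 : α < 1) :
    ∀ n, α * qe α n = pe α n := by
  intro n
  induction n with
  | zero => show α * 1 = α; ring
  | succ n ih =>
    rw [qe_succ hirr h0 n, pe_succ hirr h0 h1 n, ← ih]
    ring

lemma det (hirr : Irrational α) :
    ∀ n, (pn α (n+1) : ℤ) * (qp α n : ℤ) - (pn α n : ℤ) * (qp α (n+1) : ℤ) = (-1)^n := by
  intro n
  induction n with
  | zero => simp [pn, qp]
  | succ n ih =>
    have hp : (pn α (n+2) : ℤ) = (aq α (n+2) : ℤ) * (pn α (n+1) : ℤ) + (pn α n : ℤ) := by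
      show ((aq α (n + 2) * pn α (n + 1) + pn α n : ℕ) : ℤ) = _
      push_cast; ring
    have hq : (qp α (n+2) : ℤ) = (aq α (n+2) : ℤ) * (qp α (n+1) : ℤ) + (qp α n : ℤ) := by
      show ((aq α (n + 2) * qp α (n + 1) + qp α n : ℕ) : ℤ) = _
      push_cast; ring
    rw [hp, hq]
    ring_nf
    ring_nf at ih
    linarith [ih]

noncomputable def th (α : ℝ) (n : ℕ) : ℝ := (qp α n : ℝ) * α - (pn α n : ℝ)

lemma qe_ne (hirr : Irrational α) (h0 : 0 < α) (n : ℕ) : qe α n ≠ 0 :=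
  ne_of_gt (qe_pos hirr h0 n)

lemma theta_eq (hirr : Irrational α) (h0 : 0 < α) (h1 : α < 1) (n : ℕ) :
    th α n = (-1)^n / qe α (n+1) := by
  have hne := qe_ne hirr h0 (n+1)
  have key : th α n * qe α (n+1) = (-1)^n := by
    match n with
    | 0 =>
      show ((qp α 0 : ℝ) * α - (pn α 0 : ℝ)) * qe α 1 = (-1)^0
      rw [show qp α 0 = 1 from rfl, show pn α 0 = 0 from rfl]
      have := alpha_qe hirr h0 h1 1
      rw [show pe α 1 = 1 from rfl] at this
      push_cast
      rw [one_mul, sub_zero, this]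
      norm_num
    | n + 1 =>
      have hd : (pn α (n+1) : ℝ) * (qp α n : ℝ) - (pn α n : ℝ) * (qp α (n+1) : ℝ) = (-1)^n := by
        exact_mod_cast congrArg (fun z : ℤ => (z : ℝ)) (det hirr n)
      have ha := alpha_qe hirr h0 h1 (n+2)
      have hpe : pe α (n+2) = cq α (n+2) * (pn α (n+1) : ℝ) + (pn α n : ℝ) := rfl
      have hqe : qe α (n+2) = cq α (n+2) * (qp α (n+1) : ℝ) + (qp α n : ℝ) := rfl
      rw [hpe, hqe] at ha
      show ((qp α (n+1) : ℝ) * α - (pn α (n+1) : ℝ)) * qe α (n+2) = (-1)^(n+1)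
      rw [hqe]
      linear_combination ((qp α (n+1) : ℝ)) * ha - hd
  field_simp
  linarith [key]
lemma th_rec (n : ℕ) : th α (n+2) = (aq α (n+2) : ℝ) * th α (n+1) + th α n := by
  show (qp α (n+2) : ℝ) * α - (pn α (n+2) : ℝ) = _
  rw [show qp α (n+2) = aq α (n + 2) * qp α (n + 1) + qp α n from rfl,
    show pn α (n+2) = aq α (n + 2) * pn α (n + 1) + pn α n from rfl]
  push_cast
  rw [th, th]
  ring

noncomputable def dv (α : ℝ) (n : ℕ) : ℝ := 1 / qe α (n+1)

lemma dv_pos (hirr : Irrational α) (h0 : 0 < α) (n : ℕ) : 0 < dv α n :=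
  one_div_pos.2 (qe_pos hirr h0 (n+1))

lemma dv_mono (hirr : Irrational α) (h0 : 0 < α) (n : ℕ) : dv α (n+1) < dv α n :=
  one_div_lt_one_div_of_lt (qe_pos hirr h0 (n+1)) (qe_mono hirr h0 n)

lemma th_dv (hirr : Irrational α) (h0 : 0 < α) (h1 : α < 1) (n : ℕ) :
    th α n = (-1)^n * dv α n := by
  rw [theta_eq hirr h0 h1 n, dv, div_eq_mul_one_div]

lemma dd (hirr : Irrational α) (h0 : 0 < α) (h1 : α < 1) (n : ℕ) :
    dv α n = (aq α (n+2) : ℝ) * dv α (n+1) + dv α (n+2) := by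
  have h := th_rec (α := α) n
  rw [th_dv hirr h0 h1 (n+2), th_dv hirr h0 h1 (n+1), th_dv hirr h0 h1 n] at h
  rcases Nat.even_or_odd n with he | ho
  · rw [he.neg_one_pow, (Even.add he even_two).neg_one_pow,
      (Even.add_one he).neg_one_pow] at h
    linear_combination -h
  · rw [ho.neg_one_pow, (Odd.add_even ho even_two).neg_one_pow,
      (Odd.add_one ho).neg_one_pow] at h
    linear_combination h

lemma dv_zero (hirr : Irrational α) (h0 : 0 < α) (h1 : α < 1) : dv α 0 = α := by
  have h := theta_eq hirr h0 h1 0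
  rw [th] at h
  rw [show qp α 0 = 1 from rfl, show pn α 0 = 0 from rfl] at h
  simpa [dv] using h.symm

lemma dd0 (hirr : Irrational α) (h0 : 0 < α) (h1 : α < 1) :
    (aq α 1 : ℝ) * dv α 0 + dv α 1 = 1 := by
  have h := th_dv hirr h0 h1 1
  rw [th] at h
  rw [show qp α 1 = aq α 1 from rfl, show pn α 1 = 1 from rfl] at h
  rw [dv_zero hirr h0 h1]
  norm_num at h
  linarith [h]
lemma N_lt_qp (hirr : Irrational α) (N : ℕ) (hN : 1 ≤ N) :
    N < qp α (ostN α N + 1) := by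
  by_contra hc
  push_neg at hc
  have h2 : ostN α N + 1 ≤ N := le_trans (le_qp hirr (ostN α N + 1)) hc
  have h3 : ostN α N + 1 ≤ Nat.findGreatest (fun r => qp α r ≤ N) N :=
    Nat.le_findGreatest h2 hc
  have h4 : ostN α N + 1 ≤ ostN α N := h3
  omega

lemma ostM_step (N : ℕ) {u : ℕ} (hu : u < ostN α N) :
    ostM α N (ostN α N - u) = ostM α N (ostN α N - u - 1) % qp α (u + 1) := by
  have h1 : ostN α N - u = (ostN α N - u - 1) + 1 := by omega
  rw [h1]
  show ostM α N (ostN α N - u - 1) % qp α (ostN α N - (ostN α N - u - 1)) = _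
  congr 2
  omega

lemma M_lt (hirr : Irrational α) (N : ℕ) (hN : 1 ≤ N) {u : ℕ} (hu : u ≤ ostN α N) :
    ostM α N (ostN α N - u) < qp α (u + 1) := by
  rcases Nat.lt_or_ge u (ostN α N) with h | h
  · rw [ostM_step N h]
    exact Nat.mod_lt _ (qp_pos hirr (u+1))
  · have : u = ostN α N := by omega
    subst this
    rw [Nat.sub_self]
    exact N_lt_qp hirr N hN

lemma M_eq_digit_add (N : ℕ) {u : ℕ} (hu : u < ostN α N) :
    ostM α N (ostN α N - u - 1) = ostDigit α N (u+1) * qp α (u+1) + ostM α N (ostN α N - u) := by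
  rw [ostM_step N hu, ostDigit]
  have h1 : ostN α N - (u+1) = ostN α N - u - 1 := by omega
  rw [h1]
  have h2 := Nat.div_add_mod (ostM α N (ostN α N - u - 1)) (qp α (u+1))
  have h3 : qp α (u+1) * (ostM α N (ostN α N - u - 1) / qp α (u+1)) =
      (ostM α N (ostN α N - u - 1) / qp α (u+1)) * qp α (u+1) := Nat.mul_comm _ _
  omega

lemma digit_le (hirr : Irrational α) (N : ℕ) (hN : 1 ≤ N) {u : ℕ} (hu1 : 1 ≤ u)
    (hu2 : u ≤ ostN α N) : ostDigit α N u ≤ aq α (u+1) := by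
  obtain ⟨v, rfl⟩ : ∃ v, u = v + 1 := ⟨u-1, by omega⟩
  have hM := M_lt hirr N hN hu2
  have hq : qp α (v+2) = aq α (v+2) * qp α (v+1) + qp α v := rfl
  have hmon : qp α v ≤ qp α (v+1) := qp_mono hirr v
  have hqu := qp_pos hirr (v+1)
  rw [ostDigit]
  have hlt : ostM α N (ostN α N - (v+1)) < (aq α (v+2) + 1) * qp α (v+1) := by
    calc ostM α N (ostN α N - (v+1)) < qp α (v+1+1) := hM
    _ = aq α (v+2) * qp α (v+1) + qp α v := hq
    _ ≤ (aq α (v+2) + 1) * qp α (v+1) := by rw [add_mul, one_mul]; omega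
  exact Nat.lt_succ_iff.1 ((Nat.div_lt_iff_lt_mul hqu).2 hlt)

lemma digit0_le (hirr : Irrational α) (N : ℕ) (hN : 1 ≤ N) :
    ostDigit α N 0 + 1 ≤ aq α 1 := by
  have hM := M_lt hirr N hN (Nat.zero_le _)
  rw [ostDigit]
  have h1 : qp α (0+1) = aq α 1 := rfl
  rw [h1] at hM
  have h0 : qp α 0 = 1 := rfl
  rw [h0]
  simp only [Nat.div_one]
  omega

lemma digit_succ_le (hirr : Irrational α) (N : ℕ) (hN : 1 ≤ N) {r : ℕ}
    (hr1 : r + 1 ≤ ostN α N) (hb : 1 ≤ ostDigit α N r) :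
    ostDigit α N (r+1) + 1 ≤ aq α (r+2) := by
  by_contra hc
  push_neg at hc
  have hle : ostDigit α N (r+1) ≤ aq α (r+2) := digit_le hirr N hN (by omega) hr1
  have heq : ostDigit α N (r+1) = aq α (r+2) := by omega
  -- M_{r+1} < q_{r+2} and digit = a_{r+2} implies M_r < q_r
  have hM1 : ostM α N (ostN α N - (r+1)) < qp α (r+2) := M_lt hirr N hN hr1
  have hsplit := M_eq_digit_add (α := α) N (show r < ostN α N by omega)
  -- hsplit : M_r' relation: ostM (n - r - 1) = digit(r+1)*qp(r+1) + ostM (n - r)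
  have hq : qp α (r+2) = aq α (r+2) * qp α (r+1) + qp α r := rfl
  rw [heq] at hsplit
  have hMr : ostM α N (ostN α N - r) < qp α r := by
    have h1 : ostN α N - (r+1) = ostN α N - r - 1 := by omega
    rw [h1] at hM1
    omega
  -- then digit r = 0
  have : ostDigit α N r = 0 := by
    rw [ostDigit]
    exact Nat.div_eq_of_lt hMr
  omega
lemma Fbound (hirr : Irrational α) (h0 : 0 < α) (h1 : α < 1) (N : ℕ) (hN : 1 ≤ N) :
    ∀ j m, m + j = ostN α N + 1 → 1 ≤ m →
    -(dv α m) < (-1)^m * ∑ u ∈ Finset.Icc m (ostN α N), (ostDigit α N u : ℝ) * th α u ∧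
    (-1)^m * ∑ u ∈ Finset.Icc m (ostN α N), (ostDigit α N u : ℝ) * th α u
      < (aq α (m+1) : ℝ) * dv α m + dv α (m+1) := by
  intro j
  induction j with
  | zero =>
    intro m hm hm1
    have he : Finset.Icc m (ostN α N) = ∅ := Finset.Icc_eq_empty (by omega)
    rw [he]
    simp only [Finset.sum_empty, mul_zero]
    constructor
    · have := dv_pos hirr h0 m
      linarith
    · have h2 := dv_pos hirr h0 m
      have h3 := dv_pos hirr h0 (m+1)
      have h4 : (0:ℝ) ≤ (aq α (m+1) : ℝ) := Nat.cast_nonneg _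
      nlinarith
  | succ j ih =>
    intro m hm hm1
    have hmn : m ≤ ostN α N := by omega
    have hins : Finset.Icc m (ostN α N) = insert m (Finset.Icc (m+1) (ostN α N)) := by
      ext x
      simp only [Finset.mem_Icc, Finset.mem_insert]
      omega
    rw [hins, Finset.sum_insert (by simp)]
    have ihm := ih (m+1) (by omega) (by omega)
    set S' := ∑ u ∈ Finset.Icc (m+1) (ostN α N), (ostDigit α N u : ℝ) * th α u with hS'
    have hsq : ((-1:ℝ))^m * (-1)^m = 1 := by
      rw [← pow_add]
      exact Even.neg_one_pow ⟨m, rfl⟩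
    have hthm := th_dv hirr h0 h1 m
    have hkey : (-1:ℝ)^m * ((ostDigit α N m : ℝ) * th α m + S')
        = (ostDigit α N m : ℝ) * dv α m - ((-1:ℝ)^(m+1) * S') := by
      rw [hthm, pow_succ]
      linear_combination ((ostDigit α N m : ℝ) * dv α m) * hsq
    rw [hkey]
    have hdd := dd hirr h0 h1 m
    have hX1 : -(dv α (m+1)) < (-1:ℝ)^(m+1) * S' := ihm.1
    have hX2 : (-1:ℝ)^(m+1) * S' < dv α m := by
      have := ihm.2
      rw [← hdd] at this
      exact this
    have hbm0 : (0:ℝ) ≤ (ostDigit α N m : ℝ) * dv α m := by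
      have := dv_pos hirr h0 m
      positivity
    have hbma : (ostDigit α N m : ℝ) * dv α m ≤ (aq α (m+1) : ℝ) * dv α m := by
      have hle : (ostDigit α N m : ℝ) ≤ (aq α (m+1) : ℝ) := by
        exact_mod_cast digit_le hirr N hN hm1 hmn
      have := dv_pos hirr h0 m
      nlinarith
    constructor
    · linarith
    · linarith
lemma Elow (hirr : Irrational α) (h0 : 0 < α) (h1 : α < 1) (N : ℕ) (hN : 1 ≤ N)
    {r : ℕ} (hr : r ≤ ostN α N) :
    -(dv α (r+1)) < (-1)^(r+1) *
      ∑ u ∈ Finset.Icc (r+1) (ostN α N), (ostDigit α N u : ℝ) * th α u := by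
  rcases Nat.lt_or_ge r (ostN α N) with h | h
  · exact (Fbound hirr h0 h1 N hN (ostN α N - r) (r+1) (by omega) (by omega)).1
  · have hrn : r = ostN α N := by omega
    have he : Finset.Icc (r+1) (ostN α N) = ∅ := Finset.Icc_eq_empty (by omega)
    rw [he]
    simp only [Finset.sum_empty, mul_zero]
    have := dv_pos hirr h0 (r+1)
    linarith

lemma Ehigh (hirr : Irrational α) (h0 : 0 < α) (h1 : α < 1) (N : ℕ) (hN : 1 ≤ N)
    {r : ℕ} (hr : r ≤ ostN α N) (hb : 1 ≤ ostDigit α N r) :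
    (-1)^(r+1) * ∑ u ∈ Finset.Icc (r+1) (ostN α N), (ostDigit α N u : ℝ) * th α u
      < dv α r - dv α (r+1) := by
  rcases Nat.lt_or_ge r (ostN α N) with h | h
  · have hins : Finset.Icc (r+1) (ostN α N) = insert (r+1) (Finset.Icc (r+2) (ostN α N)) := by
      ext x
      simp only [Finset.mem_Icc, Finset.mem_insert]
      omega
    rw [hins, Finset.sum_insert (by simp)]
    set S' := ∑ u ∈ Finset.Icc (r+2) (ostN α N), (ostDigit α N u : ℝ) * th α u with hS'
    have hsq : ((-1:ℝ))^(r+1) * (-1)^(r+1) = 1 := by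
      rw [← pow_add]
      exact Even.neg_one_pow ⟨r+1, rfl⟩
    have hkey : (-1:ℝ)^(r+1) * ((ostDigit α N (r+1) : ℝ) * th α (r+1) + S')
        = (ostDigit α N (r+1) : ℝ) * dv α (r+1) - ((-1:ℝ)^(r+2) * S') := by
      rw [th_dv hirr h0 h1 (r+1), pow_succ (-1:ℝ) (r+1)]
      linear_combination ((ostDigit α N (r+1) : ℝ) * dv α (r+1)) * hsq
    rw [hkey]
    have hF := (Fbound hirr h0 h1 N hN (ostN α N - r - 1) (r+2) (by omega) (by omega)).1
    have hdd := dd hirr h0 h1 r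
    have hdig : (ostDigit α N (r+1) : ℝ) ≤ (aq α (r+2) : ℝ) - 1 := by
      have := digit_succ_le hirr N hN (by omega) hb
      have h2 : (ostDigit α N (r+1) + 1 : ℝ) ≤ (aq α (r+2) : ℝ) := by exact_mod_cast this
      linarith
    have hdvp := dv_pos hirr h0 (r+1)
    nlinarith [hF, hdd, hdig, hdvp]
  · have he : Finset.Icc (r+1) (ostN α N) = ∅ := Finset.Icc_eq_empty (by omega)
    rw [he]
    simp only [Finset.sum_empty, mul_zero]
    have := dv_mono hirr h0 r
    linarith
lemma coprime_pq (hirr : Irrational α) (r : ℕ) :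
    IsCoprime (pn α r : ℤ) (qp α r : ℤ) := by
  match r with
  | 0 =>
    rw [show qp α 0 = 1 from rfl]
    exact isCoprime_one_right
  | r + 1 =>
    have hd := det hirr r
    exact ⟨(-1)^r * (qp α r : ℤ), -((-1)^r * (pn α r : ℤ)), by
      have hsq : ((-1:ℤ))^r * (-1)^r = 1 := by
        rw [← pow_add]; exact Even.neg_one_pow ⟨r, rfl⟩
      linear_combination ((-1:ℤ))^r * hd + hsq⟩

lemma fract_rat_lb {q : ℕ} {c : ℤ} (hq : 0 < q) (hnd : ¬ ((q:ℤ) ∣ c)) :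
    1/(q:ℝ) ≤ Int.fract ((c:ℝ)/(q:ℝ)) := by
  rw [Int.fract_div_intCast_eq_div_intCast_mod]
  have h1 : 0 ≤ c % (q:ℤ) := Int.emod_nonneg c (by exact_mod_cast hq.ne')
  have h2 : c % (q:ℤ) ≠ 0 := fun hc => hnd (Int.dvd_of_emod_eq_zero hc)
  have h3 : (1:ℝ) ≤ ((c % (q:ℤ) : ℤ) : ℝ) := by
    have : (1:ℤ) ≤ c % (q:ℤ) := by omega
    exact_mod_cast this
  have hqr : (0:ℝ) < (q:ℝ) := by exact_mod_cast hq
  exact (div_le_div_iff_of_pos_right hqr).mpr h3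

lemma fract_rat_ub {q : ℕ} {c : ℤ} (hq : 0 < q) :
    Int.fract ((c:ℝ)/(q:ℝ)) ≤ 1 - 1/(q:ℝ) := by
  rw [Int.fract_div_intCast_eq_div_intCast_mod]
  have h2 : c % (q:ℤ) < q := Int.emod_lt_of_pos c (by exact_mod_cast hq)
  have h3 : ((c % (q:ℤ) : ℤ) : ℝ) ≤ (q:ℝ) - 1 := by
    have h4 : c % (q:ℤ) ≤ (q:ℤ) - 1 := by omega
    calc ((c % (q:ℤ) : ℤ) : ℝ) ≤ (((q:ℤ) - 1 : ℤ) : ℝ) := by exact_mod_cast h4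
    _ = (q:ℝ) - 1 := by push_cast; ring
  have hqr : (0:ℝ) < (q:ℝ) := by exact_mod_cast hq
  rw [div_le_iff₀ hqr]
  calc ((c % (q:ℤ) : ℤ):ℝ) ≤ (q:ℝ) - 1 := h3
  _ = (1 - 1/(q:ℝ)) * q := by field_simp
set_option maxHeartbeats 1600000 in
/-- Parity duality: bounds on the location of `{M α}` for `M` given by a canonical
Ostrowski triple `(r, s, t)`. -/
theorem stmt7 (α : ℝ) (hirr : Irrational α) (h0 : 0 < α) (h1 : α < 1)
    (N : ℕ) (hN : 1 ≤ N) (r s t : ℕ) (hr : r ≤ ostN α N)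
    (hb : 1 ≤ ostDigit α N r) (hs : s ≤ ostDigit α N r - 1)
    (ht1 : 1 ≤ t) (ht2 : t ≤ qp α r) :
    let M : ℕ := (∑ u ∈ Finset.Icc (r + 1) (ostN α N), ostDigit α N u * qp α u) +
      s * qp α r + t
    let εL : ℝ := (((s : ℝ) - 1) * (qp α r : ℝ) + (t : ℝ)) / ((qp α r : ℝ) * qe α (r + 1)) +
      1 / qe α (r + 2)
    let l : ℝ := Int.fract ((-1 : ℝ) ^ r * (t : ℝ) * (pn α r : ℝ) / (qp α r : ℝ)) + εL
    let u : ℝ := l + 1 / qe α (r + 1)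
    0 < 1 / qe α (r + 2) ∧ 1 / qe α (r + 2) ≤ l ∧ u < 1 ∧
    (Even r → l < Int.fract ((M : ℝ) * α) ∧ Int.fract ((M : ℝ) * α) < u) ∧
    (Odd r → l < 1 - Int.fract ((M : ℝ) * α) ∧ 1 - Int.fract ((M : ℝ) * α) < u) := by
  intro M εL l u
  have hMval : (M:ℕ) = (∑ u ∈ Finset.Icc (r + 1) (ostN α N), ostDigit α N u * qp α u) +
      s * qp α r + t := rfl
  have hlval : l = Int.fract ((-1 : ℝ) ^ r * (t : ℝ) * (pn α r : ℝ) / (qp α r : ℝ)) + εL := rfl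
  have huval : u = l + 1 / qe α (r + 1) := rfl
  have hεval : εL = (((s : ℝ) - 1) * (qp α r : ℝ) + (t : ℝ)) / ((qp α r : ℝ) * qe α (r + 1)) +
      1 / qe α (r + 2) := rfl
  clear_value M εL l u
  have hQn : 0 < qp α r := qp_pos hirr r
  have hQ : (0:ℝ) < (qp α r : ℝ) := by exact_mod_cast hQn
  have hs1 : s + 1 ≤ ostDigit α N r := by omega
  -- abbreviations
  obtain ⟨E, hE⟩ : ∃ E : ℝ, E = ∑ u ∈ Finset.Icc (r+1) (ostN α N), (ostDigit α N u : ℝ) * th α u := ⟨_, rfl⟩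
  have hdrp : 0 < dv α r := dv_pos hirr h0 r
  have hdr1p : 0 < dv α (r+1) := dv_pos hirr h0 (r+1)
  have hdm : dv α (r+1) < dv α r := dv_mono hirr h0 r
  -- the fract term of l
  obtain ⟨c, hcdef⟩ : ∃ c : ℤ, c = (-1)^r * ((t * pn α r : ℕ) : ℤ) := ⟨_, rfl⟩
  have harg : (-1 : ℝ) ^ r * (t : ℝ) * (pn α r : ℝ) / (qp α r : ℝ) = (c:ℝ)/(qp α r : ℝ) := by
    rw [hcdef]; push_cast; ring
  obtain ⟨f, hfdef⟩ : ∃ f : ℝ, f = Int.fract ((c:ℝ)/(qp α r : ℝ)) := ⟨_, rfl⟩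
  have hl : l = f + εL := by
    rw [hlval, harg, hfdef]
  have hεL : εL = ((s:ℝ)-1) * dv α r + ((t:ℝ)/(qp α r:ℝ)) * dv α r + dv α (r+1) := by
    have h2 := hεval
    have h3 : dv α r = 1 / qe α (r+1) := rfl
    have h4 : dv α (r+1) = 1 / qe α (r+2) := rfl
    rw [h2, h3, h4]
    have hq1 := qe_ne hirr h0 (r+1)
    have hq2 := qe_ne hirr h0 (r+2)
    field_simp
  have hu' : u = f + (s:ℝ) * dv α r + ((t:ℝ)/(qp α r:ℝ)) * dv α r + dv α (r+1) := by
    have h2 := huval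
    have h3 : dv α r = 1 / qe α (r+1) := rfl
    rw [h2, hl, hεL, ← h3]
    ring
  -- bounds on f
  have hfnn : 0 ≤ f := hfdef ▸ Int.fract_nonneg _
  have hfub : f ≤ 1 - 1/(qp α r : ℝ) := hfdef ▸ fract_rat_ub hQn
  have hflb : t < qp α r → 1/(qp α r:ℝ) ≤ f := by
    intro htlt
    rw [hfdef]
    apply fract_rat_lb hQn
    intro hdvd
    have hsq : ((-1:ℤ))^r * (-1)^r = 1 := by
      rw [← pow_add]; exact Even.neg_one_pow ⟨r, rfl⟩
    have hceq : c * (-1)^r = ((t * pn α r : ℕ) : ℤ) := by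
      rw [hcdef]; linear_combination (((t * pn α r : ℕ) : ℤ)) * hsq
    have h2 : (qp α r : ℤ) ∣ ((t * pn α r : ℕ) : ℤ) := by
      rw [← hceq]; exact hdvd.mul_right _
    have h3 : (qp α r:ℤ) ∣ (t:ℤ) * (pn α r:ℤ) := by
      have : ((t * pn α r : ℕ) : ℤ) = (t:ℤ) * (pn α r : ℤ) := by push_cast; ring
      rwa [this] at h2
    have h4 : (qp α r:ℤ) ∣ (t:ℤ) := ((coprime_pq hirr r).symm).dvd_of_dvd_mul_right h3
    have h5 : (qp α r:ℤ) ≤ t := Int.le_of_dvd (by exact_mod_cast ht1) h4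
    have : (qp α r : ℤ) < qp α r := lt_of_le_of_lt h5 (by exact_mod_cast htlt)
    omega
  -- part 2 : dv α (r+1) ≤ l
  have hP2 : dv α (r+1) ≤ l := by
    rw [hl, hεL]
    have hkey : 0 ≤ f + ((s:ℝ)-1) * dv α r + ((t:ℝ)/(qp α r:ℝ)) * dv α r := by
      rcases Nat.eq_zero_or_pos s with hs0 | hspos
      · subst hs0
        push_cast
        rcases eq_or_lt_of_le ht2 with hteq | htlt
        · have ht' : (t:ℝ) = (qp α r:ℝ) := by exact_mod_cast hteq
          rw [ht', div_self hQ.ne']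
          linarith [hfnn]
        · have hf1 := hflb htlt
          have hqe1 : (qp α r : ℝ) < qe α (r+1) := by
            calc (qp α r : ℝ) ≤ (qp α (r+1) : ℝ) := by exact_mod_cast qp_mono hirr r
            _ < qe α (r+1) := qp_lt_qe hirr h0 r
          have hdvlt : dv α r < 1/(qp α r:ℝ) := by
            rw [show dv α r = 1/qe α (r+1) from rfl]
            exact one_div_lt_one_div_of_lt hQ hqe1
          have htQ : 0 ≤ 1 - (t:ℝ)/(qp α r:ℝ) := by
            rw [sub_nonneg, div_le_one hQ]
            exact_mod_cast ht2
          have ht0 : (0:ℝ) ≤ (t:ℝ)/(qp α r:ℝ) := by positivity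
          have h6a : (1 - (t:ℝ)/(qp α r:ℝ)) * dv α r ≤ 1 * dv α r :=
            mul_le_mul_of_nonneg_right (by linarith) hdrp.le
          have h6 : (1 - (t:ℝ)/(qp α r:ℝ)) * dv α r ≤ 1/(qp α r:ℝ) := by
            rw [one_mul] at h6a
            linarith [hdvlt]
          ring_nf at h6 hf1 ⊢
          nlinarith [h6, hf1]
      · have hs' : (1:ℝ) ≤ (s:ℝ) := by exact_mod_cast hspos
        have h9 : (0:ℝ) ≤ (t:ℝ)/(qp α r:ℝ) * dv α r := by positivity
        nlinarith [hfnn, hdrp]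
    linarith
  -- part 3 : u < 1
  have hP3 : u < 1 := by
    rw [hu']
    rcases Nat.eq_zero_or_pos r with hr0 | hrpos
    · -- r = 0
      have hq0 : qp α r = 1 := by rw [hr0]; rfl
      have ht : t = 1 := by omega
      have hc0 : c = 0 := by
        rw [hcdef, hr0, show pn α 0 = 0 from rfl]
        simp
      have hf0 : f = 0 := by
        rw [hfdef, hc0]
        norm_num
      have hd0 := digit0_le hirr N hN
      rw [← hr0] at hd0
      have hs2 : (s:ℝ) ≤ (aq α 1 : ℝ) - 2 := by
        have h3 : s + 2 ≤ aq α 1 := by omega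
        have h2 : ((s + 2 : ℕ) : ℝ) ≤ (aq α 1 : ℝ) := by exact_mod_cast h3
        push_cast at h2
        linarith
      have hdd0 := dd0 hirr h0 h1
      have hdv00 : dv α r = dv α 0 := by rw [hr0]
      have hdv01 : dv α (r+1) = dv α 1 := by rw [hr0]
      have hQ1 : (qp α r : ℝ) = 1 := by rw [hq0]; norm_num
      rw [hf0, ht, hQ1, hdv00, hdv01]
      push_cast
      have hdv0p : 0 < dv α 0 := dv_pos hirr h0 0
      nlinarith [hdv0p, hs2, hdd0]
    · -- r ≥ 1
      obtain ⟨v, hv⟩ : ∃ v, r = v + 1 := ⟨r - 1, by omega⟩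
      have hble : ostDigit α N r ≤ aq α (r+1) := digit_le hirr N hN (by omega) hr
      have hs2 : (s:ℝ) ≤ (aq α (r+1) : ℝ) - 1 := by
        have h3 : s + 1 ≤ aq α (r+1) := by omega
        have h2 : ((s + 1 : ℕ) : ℝ) ≤ (aq α (r+1) : ℝ) := by exact_mod_cast h3
        push_cast at h2
        linarith
      have ht' : (t:ℝ)/(qp α r:ℝ) ≤ 1 := by
        rw [div_le_one hQ]
        exact_mod_cast ht2
      have hddv : dv α v = (aq α (r+1):ℝ) * dv α r + dv α (r+1) := by
        have h4 := dd hirr h0 h1 v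
        have e1 : v + 2 = r + 1 := by omega
        have e2 : v + 1 = r := by omega
        rw [e1, e2] at h4
        exact h4
      have hlt : dv α v < 1/(qp α r:ℝ) := by
        have h5 : (qp α (v+1) : ℝ) < qe α (v+1) := qp_lt_qe hirr h0 v
        have e2 : v + 1 = r := by omega
        rw [e2] at h5
        rw [show dv α v = 1 / qe α (v+1) from rfl, e2]
        exact one_div_lt_one_div_of_lt hQ h5
      nlinarith [hdrp, hdr1p, hfub, hddv, hlt,
        mul_le_mul_of_nonneg_right hs2 hdrp.le,
        mul_le_mul_of_nonneg_right ht' hdrp.le]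
  -- decomposition of M*α
  have hαq : (qp α r : ℝ) * α = (pn α r : ℝ) + th α r := by rw [th]; ring
  obtain ⟨x, hx⟩ : ∃ x : ℝ, x = ((t * pn α r : ℕ) : ℝ)/(qp α r : ℝ) := ⟨_, rfl⟩
  obtain ⟨g, hg⟩ : ∃ g : ℝ, g = Int.fract x := ⟨_, rfl⟩
  have hMα : (M:ℝ)*α = (∑ u ∈ Finset.Icc (r+1) (ostN α N), (ostDigit α N u:ℝ)*(pn α u:ℝ)) + E
      + (s:ℝ)*(pn α r:ℝ) + (s:ℝ)*th α r + (t:ℝ)*(pn α r:ℝ)/(qp α r:ℝ)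
      + ((t:ℝ)/(qp α r:ℝ))*th α r := by
    have hMc : (M:ℝ) = (∑ u ∈ Finset.Icc (r+1) (ostN α N), (ostDigit α N u : ℝ) * (qp α u : ℝ))
        + (s:ℝ)*(qp α r:ℝ) + (t:ℝ) := by
      rw [hMval]; push_cast; ring
    rw [hMc, add_mul, add_mul, Finset.sum_mul]
    have hterm : ∀ u ∈ Finset.Icc (r+1) (ostN α N), (ostDigit α N u : ℝ)*(qp α u:ℝ)*α
        = (ostDigit α N u:ℝ)*(pn α u:ℝ) + (ostDigit α N u:ℝ)*th α u := by
      intro u hu2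
      rw [th]; ring
    rw [Finset.sum_congr rfl hterm, Finset.sum_add_distrib, hE]
    have htα : (t:ℝ)*α = (t:ℝ)*(pn α r:ℝ)/(qp α r:ℝ) + ((t:ℝ)/(qp α r:ℝ))*th α r := by
      field_simp
      linear_combination hαq
    rw [htα]
    linear_combination (s:ℝ)*hαq
  have hsplit : Int.fract ((M:ℝ)*α)
      = Int.fract (g + E + (s:ℝ)*th α r + ((t:ℝ)/(qp α r:ℝ))*th α r) := by
    have hfl : (⌊x⌋:ℝ) + g = x := by rw [hg]; exact Int.floor_add_fract x
    have hx' : x = (t:ℝ)*(pn α r:ℝ)/(qp α r:ℝ) := by rw [hx]; push_cast; ring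
    have hAval : (M:ℝ)*α = ((((∑ u ∈ Finset.Icc (r+1) (ostN α N), ostDigit α N u * pn α u)
        + s * pn α r : ℕ) : ℤ) + ⌊x⌋ : ℤ)
        + (g + E + (s:ℝ)*th α r + ((t:ℝ)/(qp α r:ℝ))*th α r) := by
      rw [hMα]
      push_cast
      rw [← hx']
      linear_combination -hfl
    rw [hAval, Int.fract_intCast_add]
  refine ⟨hdr1p, hP2, hP3, ?_, ?_⟩
  · -- Even case
    intro hre
    have hth : th α r = dv α r := by rw [th_dv hirr h0 h1 r, hre.neg_one_pow, one_mul]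
    have hfg : f = g := by
      rw [hfdef, hg, hx, hcdef, show ((-1:ℤ))^r = 1 from hre.neg_one_pow]
      norm_num
    have hEl := Elow hirr h0 h1 N hN hr
    have hEh := Ehigh hirr h0 h1 N hN hr hb
    rw [(hre.add_one).neg_one_pow, ← hE] at hEl hEh
    -- hEl : -(dv α (r+1)) < -1 * E ; hEh : -1 * E < dv α r - dv α (r+1)
    rw [hsplit, hth]
    have hlV : l < g + E + (s:ℝ)*dv α r + ((t:ℝ)/(qp α r:ℝ))*dv α r := by
      rw [hl, hεL, ← hfg]
      nlinarith [hEh]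
    have hVu : g + E + (s:ℝ)*dv α r + ((t:ℝ)/(qp α r:ℝ))*dv α r < u := by
      rw [hu', ← hfg]
      nlinarith [hEl]
    have hself : Int.fract (g + E + (s:ℝ)*dv α r + ((t:ℝ)/(qp α r:ℝ))*dv α r)
        = g + E + (s:ℝ)*dv α r + ((t:ℝ)/(qp α r:ℝ))*dv α r :=
      Int.fract_eq_self.2 ⟨by linarith [hdr1p, hP2], by linarith [hP3]⟩
    rw [hself]
    exact ⟨hlV, hVu⟩
  · -- Odd case
    intro hro
    have hth : th α r = -(dv α r) := by rw [th_dv hirr h0 h1 r, hro.neg_one_pow]; ring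
    have hfneg : f = Int.fract (-x) := by
      have hcx : (c:ℝ)/(qp α r:ℝ) = -x := by
        rw [hcdef, show ((-1:ℤ))^r = -1 from hro.neg_one_pow, hx]
        push_cast
        ring
      rw [hfdef, hcx]
    have hEl := Elow hirr h0 h1 N hN hr
    have hEh := Ehigh hirr h0 h1 N hN hr hb
    rw [(hro.add_one).neg_one_pow, ← hE, one_mul] at hEl hEh
    -- hEl : -(dv α (r+1)) < E ; hEh : E < dv α r - dv α (r+1)
    obtain ⟨W, hW⟩ : ∃ W:ℝ,
        W = f + (s:ℝ)*dv α r + ((t:ℝ)/(qp α r:ℝ))*dv α r - E := ⟨_, rfl⟩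
    have hlW : l < W := by
      rw [hl, hεL, hW]
      linarith [hEh]
    have hWu : W < u := by
      rw [hu', hW]
      linarith [hEl]
    have hW0 : 0 < W := by linarith [hdr1p, hP2]
    have hW1 : W < 1 := by linarith [hP3]
    have hVW : Int.fract ((M:ℝ)*α) = 1 - W := by
      rw [hsplit, hth]
      rcases eq_or_ne (Int.fract x) 0 with hg0 | hg0
      · have hf0 : f = 0 := by
          rw [hfneg]
          exact Int.fract_neg_eq_zero.2 hg0
        have hVeq : g + E + (s:ℝ)*(-(dv α r)) + ((t:ℝ)/(qp α r:ℝ))*(-(dv α r)) = -W := by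
          rw [hg, hg0, hW, hf0]; ring
        rw [hVeq]
        have hfw : Int.fract W = W := Int.fract_eq_self.2 ⟨hW0.le, hW1⟩
        rw [Int.fract_neg (by rw [hfw]; exact hW0.ne'), hfw]
      · have hf1' : f = 1 - g := by rw [hfneg, Int.fract_neg hg0, hg]
        have hVeq : g + E + (s:ℝ)*(-(dv α r)) + ((t:ℝ)/(qp α r:ℝ))*(-(dv α r)) = 1 - W := by
          rw [hW, hf1', hg]; ring
        rw [hVeq, Int.fract_eq_self.2 ⟨by linarith, by linarith⟩]
    rw [hVW]
    constructor <;> linarith
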